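/- arXiv:1901.03042 — 5 statements merged into one kernel-verified Lean document; each statement's English description precedes it below -/
import Mathlib

section
/- The triple {D₀, D₁, D₂} is a valid POVM on ℂ²: each of D₀, D₁, D₂ is a positive semidefinite 2×2 complex matrix and D₀ + D₁ + D₂ = I. -/
noncomputable section

open Matrix
open scoped ComplexOrder

/-- computational basis vector `|0⟩ = (1,0)` -/
def ket0 : Fin 2 → ℂ := ![1, 0]

/-- computational basis vector `|1⟩ = (0,1)` -/
def ket1 : Fin 2 → ℂ := ![0, 1]

/-- rotated basis vector `|0´⟩ = cos θ |0⟩ + sin θ |1⟩` -/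
def ket0Rot (θ : ℝ) : Fin 2 → ℂ := ![(Real.cos θ : ℂ), (Real.sin θ : ℂ)]

/-- rotated basis vector `|1´⟩ = sin θ |0⟩ − cos θ |1⟩` -/
def ket1Rot (θ : ℝ) : Fin 2 → ℂ := ![(Real.sin θ : ℂ), -(Real.cos θ : ℂ)]


/-- outer product `|v⟩⟨v|` as a 2×2 complex matrix -/
def outer (v : Fin 2 → ℂ) : Matrix (Fin 2) (Fin 2) ℂ := Matrix.vecMulVec v (star v)


/-- `D₀ = (1/(1+cos θ)) |1´⟩⟨1´|` -/
def D0 (θ : ℝ) : Matrix (Fin 2) (Fin 2) ℂ := ((1 / (1 + Real.cos θ) : ℝ) : ℂ) • outer (ket1Rot θ)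

/-- `D₁ = (1/(1+cos θ)) |1⟩⟨1|` -/
def D1 (θ : ℝ) : Matrix (Fin 2) (Fin 2) ℂ := ((1 / (1 + Real.cos θ) : ℝ) : ℂ) • outer ket1

/-- `D₂ = I − D₀ − D₁` -/
def D2 (θ : ℝ) : Matrix (Fin 2) (Fin 2) ℂ := 1 - D0 θ - D1 θ


lemma outer_posSemidef (v : Fin 2 → ℂ) : (outer v).PosSemidef := by
  have : outer v = (replicateCol (Fin 1) v) * (replicateCol (Fin 1) v)ᴴ := by
    rw [conjTranspose_replicateCol, outer, vecMulVec_eq (Fin 1)]; rfl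
  rw [this]
  exact posSemidef_self_mul_conjTranspose _

lemma smul_posSemidef {M : Matrix (Fin 2) (Fin 2) ℂ} {r : ℝ} (hr : 0 ≤ r)
    (hM : M.PosSemidef) : ((r : ℂ) • M).PosSemidef := by
  constructor
  · have := hM.1.eq
    unfold Matrix.IsHermitian
    rw [conjTranspose_smul, this]
    simp
  · intro x
    exact (hM.smul (a := (r : ℂ)) (by exact_mod_cast hr)).2 x



/-- {D₀, D₁, D₂} is a valid POVM on ℂ²: each element is positive semidefinite
and they sum to the identity. -/
theorem povm_D_valid (θ : ℝ) (hθ : θ ∈ Set.Ioo 0 (Real.pi / 2)) :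
    (D0 θ).PosSemidef ∧ (D1 θ).PosSemidef ∧ (D2 θ).PosSemidef ∧
      D0 θ + D1 θ + D2 θ = 1 := by
  obtain ⟨h0, h2⟩ := hθ
  have hc : 0 < Real.cos θ := Real.cos_pos_of_mem_Ioo ⟨by linarith [Real.pi_pos], h2⟩
  have hc1 : (0:ℝ) < 1 + Real.cos θ := by linarith
  have hk : (0:ℝ) ≤ 1 / (1 + Real.cos θ) := by positivity
  have hpyth : Real.sin θ ^ 2 + Real.cos θ ^ 2 = 1 := Real.sin_sq_add_cos_sq θ
  have hsR : Real.sin θ * Real.sin θ = (1 - Real.cos θ) * (1 + Real.cos θ) := by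
    nlinarith [Real.sin_sq_add_cos_sq θ]
  have hD2 : D2 θ = ((Real.cos θ / (1 + Real.cos θ) ^ 2 : ℝ) : ℂ) •
      outer ![((1 + Real.cos θ : ℝ) : ℂ), ((Real.sin θ : ℝ) : ℂ)] := by
    set sθ := Real.sin θ with hs_def
    set cθ := Real.cos θ with hc_def
    ext i j
    fin_cases i <;> fin_cases j <;>
      simp only [D2, D0, D1, outer, ket1Rot, ket1, Matrix.vecMulVec, Matrix.one_apply,
        Matrix.smul_apply, Matrix.sub_apply, Matrix.of_apply, Matrix.cons_val_zero,
        Matrix.cons_val_one, Matrix.head_cons, Pi.star_apply, star_neg,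
        Fin.mk_zero, Fin.mk_one, Fin.isValue, reduceIte, Fin.mk.injEq, ← hs_def, ← hc_def,
        Complex.star_def, Complex.conj_ofReal, smul_eq_mul, mul_zero, mul_one, zero_mul,
        sub_zero, mul_neg, neg_mul, neg_neg, map_neg, map_zero, map_one] <;>
      push_cast <;>
      field_simp <;>
      norm_cast <;>
      nlinarith [hsR, hc, hc1]
  refine ⟨smul_posSemidef hk (outer_posSemidef _),
    smul_posSemidef hk (outer_posSemidef _), ?_, by rw [D2]; abel⟩
  rw [hD2]
  exact smul_posSemidef (by positivity) (outer_posSemidef _)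
end
end

section
/- When the input state is |0⟩, the POVM {D₀, D₁, D₂} produces outcome D₀ with probability 1 − cos θ, outcome D₁ with probability 0, and outcome D₂ with probability cos θ; that is, ⟨0|D₀|0⟩ = 1 − cos θ, ⟨0|D₁|0⟩ = 0, and ⟨0|D₂|0⟩ = cos θ. -/
noncomputable section

open Matrix
open scoped ComplexOrder

/-- Born-rule probability `⟨ψ|E|ψ⟩` of outcome `E` on input state `ψ` -/
def prob (E : Matrix (Fin 2) (Fin 2) ℂ) (ψ : Fin 2 → ℂ) : ℂ := star ψ ⬝ᵥ (E *ᵥ ψ)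


/-- On input |0⟩ the POVM {D₀, D₁, D₂} yields outcomes with probabilities
1 − cos θ, 0, cos θ respectively. -/
theorem povm_probs_ket0 (θ : ℝ) (hθ : θ ∈ Set.Ioo 0 (Real.pi / 2)) :
    prob (D0 θ) ket0 = ((1 - Real.cos θ : ℝ) : ℂ) ∧
      prob (D1 θ) ket0 = 0 ∧
      prob (D2 θ) ket0 = ((Real.cos θ : ℝ) : ℂ) := by
  obtain ⟨h1, h2⟩ := hθ
  have hc : Real.cos θ > 0 := Real.cos_pos_of_mem_Ioo ⟨by linarith [Real.pi_pos], h2⟩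
  have hne : (1 + Real.cos θ : ℝ) ≠ 0 := by linarith
  have hne' : ((1 + Real.cos θ : ℝ) : ℂ) ≠ 0 := by exact_mod_cast hne
  have hs : (Real.sin θ : ℂ) ^ 2 = 1 - (Real.cos θ : ℂ) ^ 2 := by
    exact_mod_cast Real.sin_sq θ
  have key : prob (D0 θ) ket0 = ((1 - Real.cos θ : ℝ) : ℂ) := by
    simp [prob, D0, outer, ket0, ket1Rot, Matrix.mulVec, Matrix.vecMulVec_apply,
      dotProduct, Fin.sum_univ_two, Matrix.smul_apply, Pi.star_apply,
      Complex.conj_ofReal, smul_eq_mul, -Matrix.cons_vecMulVec]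
    rw [← Complex.ofReal_sin, ← Complex.ofReal_cos, Complex.conj_ofReal]
    have hne2 : (1 : ℂ) + (Real.cos θ : ℂ) ≠ 0 := by exact_mod_cast hne
    rw [inv_mul_eq_div, div_eq_iff hne2]
    linear_combination hs
  have key1 : prob (D1 θ) ket0 = 0 := by
    simp [prob, D1, outer, ket0, ket1, Matrix.mulVec, Matrix.vecMulVec_apply,
      dotProduct, Fin.sum_univ_two, -Matrix.cons_vecMulVec]
  refine ⟨key, key1, ?_⟩
  have : prob (D2 θ) ket0 = prob 1 ket0 - prob (D0 θ) ket0 - prob (D1 θ) ket0 := by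
    simp only [prob, D2, Matrix.sub_mulVec, dotProduct_sub]
  rw [this, key, key1]
  simp [prob, ket0, Matrix.mulVec, dotProduct, Fin.sum_univ_two, Matrix.one_apply]
end
end

section
/- (Correctness, Theorem 1 core computation) If the input state is |0⟩ or |0'⟩ each with probability 1/2 and Alice measures with the POVM {D₀, D₁, D₂}, declaring '|0⟩' on outcome D₀ and '|0'⟩' on outcome D₁, then her probability of a correct conclusive identification is (1/2)⟨0|D₀|0⟩ + (1/2)⟨0'|D₁|0'⟩ = 1 − cos θ; likewise for the states |1⟩, |1'⟩ and the POVM {D₀', D₁', D₂'}: (1/2)⟨1|D₀'|1⟩ + (1/2)⟨1'|D₁'|1'⟩ = 1 − cos θ. -/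
noncomputable section

open Matrix
open scoped ComplexOrder

/-- `D₀' = (1/(1+cos θ)) |0´⟩⟨0´|` -/
def D0' (θ : ℝ) : Matrix (Fin 2) (Fin 2) ℂ := ((1 / (1 + Real.cos θ) : ℝ) : ℂ) • outer (ket0Rot θ)

/-- `D₁' = (1/(1+cos θ)) |0⟩⟨0|` -/
def D1' (θ : ℝ) : Matrix (Fin 2) (Fin 2) ℂ := ((1 / (1 + Real.cos θ) : ℝ) : ℂ) • outer ket0

/-- `D₂' = I − D₀' − D₁'` -/
def D2' (θ : ℝ) : Matrix (Fin 2) (Fin 2) ℂ := 1 - D0' θ - D1' θ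

/-- Correctness (Theorem 1 core computation): with input |0⟩ or |0´⟩ each with
probability 1/2, Alice's probability of a correct conclusive identification is
(1/2)⟨0|D₀|0⟩ + (1/2)⟨0´|D₁|0´⟩ = 1 − cos θ; likewise for |1⟩, |1´⟩ with
the POVM {D₀', D₁', D₂'}. -/
theorem correct_conclusive_prob (θ : ℝ) (hθ : θ ∈ Set.Ioo 0 (Real.pi / 2)) :
    (1 / 2 : ℂ) * prob (D0 θ) ket0 + (1 / 2 : ℂ) * prob (D1 θ) (ket0Rot θ) =
        ((1 - Real.cos θ : ℝ) : ℂ) ∧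
      (1 / 2 : ℂ) * prob (D0' θ) ket1 + (1 / 2 : ℂ) * prob (D1' θ) (ket1Rot θ) =
        ((1 - Real.cos θ : ℝ) : ℂ) := by
  have hc : Real.cos θ > 0 := Real.cos_pos_of_mem_Ioo ⟨by linarith [hθ.1, Real.pi_pos], hθ.2⟩
  have h1 : (1 : ℝ) + Real.cos θ ≠ 0 := by positivity
  have hkeyR : (1 / (1 + Real.cos θ)) * (Real.sin θ)^2 = 1 - Real.cos θ := by
    have := Real.sin_sq_add_cos_sq θ
    field_simp
    nlinarith [this]
  have hkey : ((1 / (1 + Real.cos θ) : ℝ) : ℂ) * ((Real.sin θ : ℂ))^2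
      = ((1 - Real.cos θ : ℝ) : ℂ) := by
    exact_mod_cast congrArg Complex.ofReal hkeyR
  constructor <;>
  · simp only [prob, D0, D1, D0', D1', outer, ket0, ket1, ket0Rot, ket1Rot,
      Matrix.smul_mulVec, Matrix.mulVec, Matrix.vecMulVec_apply, dotProduct,
      Fin.sum_univ_two, Pi.star_apply, Matrix.cons_val_zero, Matrix.cons_val_one,
      Matrix.head_cons, Pi.smul_apply, smul_eq_mul, star_one, star_zero,
      Complex.star_def, Complex.conj_ofReal, map_neg, Matrix.smul_apply, Matrix.vecMulVec_apply, star_one, star_zero, _root_.map_one, _root_.map_zero]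
    linear_combination hkey
end
end

section
/- (Appendix, optimality of the POVM) For α ≥ 0 define D₂(α) = I − α|1'⟩⟨1'| − α|1⟩⟨1|. Then for every α with 0 ≤ α ≤ 1/(1 + cos θ): the two inconclusive probabilities coincide and equal ⟨0|D₂(α)|0⟩ = ⟨0'|D₂(α)|0'⟩ = 1 − α sin²θ, this quantity is at least cos θ, and it equals its minimum value cos θ exactly when α = 1/(1 + cos θ). Hence the POVM {D₀, D₁, D₂} minimizes the inconclusive probability among this family of unambiguous discrimination POVMs. -/
noncomputable section

open Matrix
open scoped ComplexOrder

/-- D₂(α) = I − α|1´⟩⟨1´| − α|1⟩⟨1| -/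
def D2fam (θ α : ℝ) : Matrix (Fin 2) (Fin 2) ℂ :=
  1 - (α : ℂ) • outer (ket1Rot θ) - (α : ℂ) • outer ket1

/-- Appendix, optimality of the POVM: for 0 ≤ α ≤ 1/(1 + cos θ), the two
inconclusive probabilities coincide and equal ⟨0|D₂(α)|0⟩ = ⟨0´|D₂(α)|0´⟩
= 1 − α sin²θ; this quantity is at least cos θ, and equals cos θ exactly
when α = 1/(1 + cos θ). -/
theorem D2fam_inconclusive_optimal (θ : ℝ) (hθ : θ ∈ Set.Ioo 0 (Real.pi / 2))
    (α : ℝ) (hα0 : 0 ≤ α) (hα1 : α ≤ 1 / (1 + Real.cos θ)) :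
    prob (D2fam θ α) ket0 = ((1 - α * (Real.sin θ) ^ 2 : ℝ) : ℂ) ∧
      prob (D2fam θ α) (ket0Rot θ) = ((1 - α * (Real.sin θ) ^ 2 : ℝ) : ℂ) ∧
      Real.cos θ ≤ 1 - α * (Real.sin θ) ^ 2 ∧
      (1 - α * (Real.sin θ) ^ 2 = Real.cos θ ↔ α = 1 / (1 + Real.cos θ)) := by
  obtain ⟨hθ0, hθ1⟩ := hθ
  have hc0 : 0 < Real.cos θ := Real.cos_pos_of_mem_Ioo ⟨by linarith [Real.pi_pos], hθ1⟩
  have hs0 : 0 < Real.sin θ := Real.sin_pos_of_pos_of_lt_pi hθ0 (by linarith [Real.pi_pos, Real.pi_gt_three])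
  have hpyth : Real.sin θ ^ 2 + Real.cos θ ^ 2 = 1 := Real.sin_sq_add_cos_sq θ
  have h1c : (0:ℝ) < 1 + Real.cos θ := by linarith
  refine ⟨?_, ?_, ?_, ?_⟩
  · simp only [prob, D2fam, ket0, ket1, ket0Rot, ket1Rot, outer, Matrix.vecMulVec,
      Matrix.mulVec, dotProduct, Fin.sum_univ_two, Matrix.sub_apply, Matrix.smul_apply,
      Matrix.one_apply, Matrix.of_apply, Pi.star_apply, Complex.star_def, Complex.conj_ofReal,
      Matrix.cons_val_zero, Matrix.cons_val_one, Matrix.head_cons, smul_eq_mul]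
    norm_num
    norm_cast
    left; ring
  · simp only [prob, D2fam, ket0, ket1, ket0Rot, ket1Rot, outer, Matrix.vecMulVec,
      Matrix.mulVec, dotProduct, Fin.sum_univ_two, Matrix.sub_apply, Matrix.smul_apply,
      Matrix.one_apply, Matrix.of_apply, Pi.star_apply, Complex.star_def, Complex.conj_ofReal,
      Matrix.cons_val_zero, Matrix.cons_val_one, Matrix.head_cons, smul_eq_mul]
    norm_num
    norm_cast
    simp only [Complex.conj_ofReal]
    norm_cast
    nlinarith [hpyth]
  · have : α * Real.sin θ ^ 2 ≤ (1 / (1 + Real.cos θ)) * Real.sin θ ^ 2 := by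
      apply mul_le_mul_of_nonneg_right hα1 (sq_nonneg _)
    have h2 : (1 / (1 + Real.cos θ)) * Real.sin θ ^ 2 = 1 - Real.cos θ := by
      field_simp
      nlinarith [hpyth]
    linarith
  · constructor
    · intro h
      have : α * Real.sin θ ^ 2 = (1 / (1 + Real.cos θ)) * Real.sin θ ^ 2 := by
        have h2 : (1 / (1 + Real.cos θ)) * Real.sin θ ^ 2 = 1 - Real.cos θ := by
          field_simp; nlinarith [hpyth]
        linarith
      have hs2 : Real.sin θ ^ 2 ≠ 0 := by positivity
      exact mul_right_cancel₀ hs2 this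
    · intro h
      subst h
      have h2 : (1 / (1 + Real.cos θ)) * Real.sin θ ^ 2 = 1 - Real.cos θ := by
        field_simp; nlinarith [hpyth]
      linarith
end
end

section
/- (Middle-state attack analysis) Define the middle states |0''⟩ = cos(θ/2)|0⟩ + sin(θ/2)|1⟩ and |1''⟩ = sin(θ/2)|0⟩ − cos(θ/2)|1⟩. Then ⟨1''|D₀|1''⟩ = 1/2, ⟨1''|D₁|1''⟩ = 1/2 and ⟨1''|D₂|1''⟩ = 0; similarly ⟨0''|D₀'|0''⟩ = 1/2, ⟨0''|D₁'|0''⟩ = 1/2 and ⟨0''|D₂'|0''⟩ = 0. Hence under the middle-state attack Alice never obtains the inconclusive outcome, and each of her two conclusive outcomes occurs with probability 1/2, so she guesses each raw key bit correctly with probability exactly 1/2. -/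
noncomputable section

open Matrix
open scoped ComplexOrder

/-- middle state |0´´⟩ = cos(θ/2)|0⟩ + sin(θ/2)|1⟩ -/
def ket0Mid (θ : ℝ) : Fin 2 → ℂ := ![(Real.cos (θ / 2) : ℂ), (Real.sin (θ / 2) : ℂ)]

/-- middle state |1´´⟩ = sin(θ/2)|0⟩ − cos(θ/2)|1⟩ -/
def ket1Mid (θ : ℝ) : Fin 2 → ℂ := ![(Real.sin (θ / 2) : ℂ), -(Real.cos (θ / 2) : ℂ)]

set_option maxHeartbeats 1000000 in
/-- Middle-state attack analysis: on the middle states Alice never obtains the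
inconclusive outcome and each conclusive outcome occurs with probability 1/2:
⟨1´´|D₀|1´´⟩ = ⟨1´´|D₁|1´´⟩ = 1/2, ⟨1´´|D₂|1´´⟩ = 0, and
⟨0´´|D₀'|0´´⟩ = ⟨0´´|D₁'|0´´⟩ = 1/2, ⟨0´´|D₂'|0´´⟩ = 0. -/
theorem middle_state_attack (θ : ℝ) (hθ : θ ∈ Set.Ioo 0 (Real.pi / 2)) :
    prob (D0 θ) (ket1Mid θ) = (1 / 2 : ℂ) ∧
      prob (D1 θ) (ket1Mid θ) = (1 / 2 : ℂ) ∧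
      prob (D2 θ) (ket1Mid θ) = 0 ∧
      prob (D0' θ) (ket0Mid θ) = (1 / 2 : ℂ) ∧
      prob (D1' θ) (ket0Mid θ) = (1 / 2 : ℂ) ∧
      prob (D2' θ) (ket0Mid θ) = 0 := by
  obtain ⟨h0, h1⟩ := hθ
  have hpi := Real.pi_pos
  have hc : 0 < Real.cos (θ/2) := Real.cos_pos_of_mem_Ioo ⟨by linarith, by linarith⟩
  have hcos : Real.cos θ = 2 * Real.cos (θ/2)^2 - 1 := by
    have h := Real.cos_sq (θ/2)
    have h2 : 2 * (θ/2) = θ := by ring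
    rw [h2] at h; nlinarith
  have hsin : Real.sin θ = 2 * Real.sin (θ/2) * Real.cos (θ/2) := by
    have h := Real.sin_two_mul (θ/2)
    have h2 : 2 * (θ/2) = θ := by ring
    rw [h2] at h; linarith
  have hpyth := Real.sin_sq_add_cos_sq (θ/2)
  have hne : (1 + Real.cos θ) ≠ 0 := by nlinarith
  have hcne : Real.cos (θ/2) ≠ 0 := ne_of_gt hc
  have hcneC : (Real.cos (θ/2) : ℂ) ≠ 0 := Complex.ofReal_ne_zero.mpr hcne
  have hpythC : (Real.sin (θ/2) : ℂ)^2 + (Real.cos (θ/2) : ℂ)^2 = 1 := by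
    have h := congrArg (fun x : ℝ => (x:ℂ)) hpyth
    simp only [Complex.ofReal_add, Complex.ofReal_pow, Complex.ofReal_one] at h
    exact h
  have hcC : (Real.cos θ : ℂ) = 2 * (Real.cos (θ/2) : ℂ)^2 - 1 := by
    rw [hcos]
    simp only [Complex.ofReal_sub, Complex.ofReal_mul, Complex.ofReal_pow,
      Complex.ofReal_one, Complex.ofReal_ofNat]
  have hsC : (Real.sin θ : ℂ) = 2 * (Real.sin (θ/2) : ℂ) * (Real.cos (θ/2) : ℂ) := by
    rw [hsin]
    simp only [Complex.ofReal_mul, Complex.ofReal_ofNat]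
  have hinv : (1 / (1 + Real.cos θ) : ℝ) = 1 / (2 * Real.cos (θ/2)^2) := by
    rw [hcos]; ring_nf
  have hinvC : ((1 / (1 + Real.cos θ) : ℝ) : ℂ) = 1 / (2 * (Real.cos (θ/2) : ℂ)^2) := by
    rw [hinv]
    simp only [Complex.ofReal_div, Complex.ofReal_mul, Complex.ofReal_pow,
      Complex.ofReal_one, Complex.ofReal_ofNat]
  refine ⟨?_, ?_, ?_, ?_, ?_, ?_⟩ <;>
  · simp only [prob, D0, D1, D2, D0', D1', D2', outer, ket0, ket1, ket0Rot, ket1Rot,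
      ket0Mid, ket1Mid, Matrix.vecMulVec_apply, Matrix.mulVec, dotProduct,
      Fin.sum_univ_two, Matrix.smul_apply, Matrix.sub_apply, Matrix.one_apply,
      Matrix.cons_val_zero, Matrix.cons_val_one, Matrix.head_cons, Pi.star_apply,
      Complex.star_def, map_neg, map_zero, _root_.map_one, Complex.conj_ofReal,
      smul_eq_mul, if_true, if_false, Fin.zero_eq_one_iff, Fin.one_eq_zero_iff,
      Nat.succ_ne_self, mul_zero, zero_mul, mul_one, one_mul]
    simp only [hinvC, hcC, hsC]
    set sc : ℂ := (Real.sin (θ/2) : ℂ) with hsdef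
    set cc : ℂ := (Real.cos (θ/2) : ℂ) with hcdef
    field_simp
    try ring_nf
    try linear_combination (8*cc^4 + 8*sc^2*cc^2) * hpythC
    try linear_combination (8*cc^6 - 16*cc^8 - 16*sc^2*cc^6) * hpythC
    try linear_combination (4*(sc^2+cc^2)) * hpythC
    try linear_combination (2 - 4*(sc^2+cc^2)) * hpythC
end
end
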